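/- arXiv:0807.2318 — 2 statements merged into one kernel-verified Lean document; each statement's English description precedes it below -/
import Mathlib

section
/- Let M be sufficient, B a complementary basis with dictionary D = −A_B^{-1} A_N, and let i,j ∈ B be distinct such that B′ = B\{i,j} ∪ {ī, j̄} is a basis. Then dim(𝒞(B\{i}) ∩ 𝒞(B′)) = n−1 if and only if D_{i,ī} = 0 and D_{j,ī} < 0. -/
open Matrix

/-- `M` is column sufficient. -/
def ColSuff {n : ℕ} (M : Matrix (Fin n) (Fin n) ℝ) : Prop :=
  ∀ z : Fin n → ℝ, (∀ i, z i * M.mulVec z i ≤ 0) → ∀ i, z i * M.mulVec z i = 0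

/-- `M` is sufficient: both `M` and `Mᵀ` are column sufficient. -/
def Suff {n : ℕ} (M : Matrix (Fin n) (Fin n) ℝ) : Prop := ColSuff M ∧ ColSuff Mᵀ

/-- The matrix `A = [I, -M]`, with columns indexed by `Fin n ⊕ Fin n`. -/
def Amat {n : ℕ} (M : Matrix (Fin n) (Fin n) ℝ) : Matrix (Fin n) (Fin n ⊕ Fin n) ℝ :=
  Matrix.fromCols 1 (-M)

/-- The complementary index. -/
def bar {n : ℕ} : Fin n ⊕ Fin n → Fin n ⊕ Fin n
  | .inl i => .inr i
  | .inr i => .inl i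

/-- `B` is a basis of `A = [I, -M]`: `n` linearly independent columns. -/
def IsBasis {n : ℕ} (M : Matrix (Fin n) (Fin n) ℝ) (B : Finset (Fin n ⊕ Fin n)) : Prop :=
  B.card = n ∧ LinearIndependent ℝ (fun j : B => (Amat M)ᵀ (j : Fin n ⊕ Fin n))

/-- A complementary basis: a basis containing exactly one of each complementary pair. -/
def IsComplBasis {n : ℕ} (M : Matrix (Fin n) (Fin n) ℝ) (B : Finset (Fin n ⊕ Fin n)) : Prop :=
  IsBasis M B ∧ ∀ i : Fin n, Xor' (Sum.inl i ∈ B) (Sum.inr i ∈ B)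

/-- The complementary cone `𝒞(J)`: nonnegative combinations of the columns of `A` indexed by `J`. -/
def coneOf {n : ℕ} (M : Matrix (Fin n) (Fin n) ℝ) (J : Finset (Fin n ⊕ Fin n)) :
    Set (Fin n → ℝ) :=
  {y | ∃ c : Fin n ⊕ Fin n → ℝ, (∀ j, 0 ≤ c j) ∧ (∀ j ∉ J, c j = 0) ∧ y = (Amat M).mulVec c}

/-!
On `𝒞(B∖i)` the coordinate `β i` vanishes, so `S = 𝒞(B∖i) ∩ 𝒞(B′)` spans at most the hyperplane
`β i ⬝ y = 0`. As `S` contains `0` and the columns `A_k`, `k ∈ B∖{i,j}`, it spans the whole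
hyperplane exactly when some `y ∈ S` has `β j ⬝ y ≠ 0`: then `A_j` lies in the span as well.

Write such a `y ∈ 𝒞(B′)` as `u A_ī + v A_j̄ + z` with `z ∈ 𝒞(B∖{i,j})`. Column sufficiency of `M`,
applied to a kernel vector of `A`, makes the dictionary column sufficient; for `γ = u e_ī + v e_j̄`
we have `(Dγ)_i = 0` and `(Dγ)_j < 0`, which forces `v = 0`, and then `D_{iī} = 0`, `D_{jī} < 0`.
Conversely, if these hold, `A_ī + ∑_{k ∈ B∖{i,j}} max(D_{kī}, 0) A_k` is such a point.
-/

open Finset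

lemma bar_injective {n : ℕ} : Function.Injective (bar (n := n)) := by
  rintro (a | a) (b | b) h <;> simp_all [bar]

lemma IsComplBasis.bar_notMem {n : ℕ} {M : Matrix (Fin n) (Fin n) ℝ} {B : Finset (Fin n ⊕ Fin n)}
    (hB : IsComplBasis M B) {k : Fin n ⊕ Fin n} (hk : k ∈ B) : bar k ∉ B := by
  rcases k with m | m <;> rcases hB.2 m with ⟨h₁, h₂⟩ | ⟨h₁, h₂⟩ <;> simp_all [bar]

lemma Amat_mulVec_eq_sum {n : ℕ} (M : Matrix (Fin n) (Fin n) ℝ) (c : Fin n ⊕ Fin n → ℝ) :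
    Amat M *ᵥ c = ∑ l, c l • (Amat M)ᵀ l := by
  simp [mulVec_eq_sum]

lemma Amat_mulVec_indicator {n : ℕ} (M : Matrix (Fin n) (Fin n) ℝ) (J : Finset (Fin n ⊕ Fin n))
    (a : Fin n ⊕ Fin n → ℝ) :
    Amat M *ᵥ (fun l => if l ∈ J then a l else 0) = ∑ l ∈ J, a l • (Amat M)ᵀ l := by
  simp only [Amat_mulVec_eq_sum, ite_smul, zero_smul, sum_ite_mem, univ_inter]

lemma Amat_mulVec_single {n : ℕ} (M : Matrix (Fin n) (Fin n) ℝ) (l : Fin n ⊕ Fin n) (t : ℝ) :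
    Amat M *ᵥ Pi.single l t = t • (Amat M)ᵀ l := by
  simp only [mulVec_single, op_smul_eq_smul]
  rfl

lemma ColSuff.mul_eq_zero_of_Amat_mulVec_eq_zero {n : ℕ} {M : Matrix (Fin n) (Fin n) ℝ}
    (hM : ColSuff M) {w : Fin n ⊕ Fin n → ℝ} (hw : Amat M *ᵥ w = 0)
    (hle : ∀ m, w (.inl m) * w (.inr m) ≤ 0) (m : Fin n) : w (.inl m) * w (.inr m) = 0 := by
  have hMw : ∀ m, (M *ᵥ (w ∘ Sum.inr)) m = w (.inl m) := fun m => by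
    have := congrFun hw m
    simp only [Amat, fromCols_mulVec, one_mulVec, neg_mulVec, Pi.add_apply, Pi.neg_apply,
      Function.comp_apply, Pi.zero_apply] at this
    linarith
  simpa only [Function.comp_apply, hMw, mul_comm] using
    hM (w ∘ Sum.inr) (fun m => by simpa only [Function.comp_apply, hMw, mul_comm] using hle m) m

section Cone

variable {n : ℕ} {M : Matrix (Fin n) (Fin n) ℝ}

lemma mem_coneOf_iff {J : Finset (Fin n ⊕ Fin n)} {y : Fin n → ℝ} :
    y ∈ coneOf M J ↔ ∃ a : Fin n ⊕ Fin n → ℝ, (∀ k ∈ J, 0 ≤ a k) ∧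
      y = ∑ k ∈ J, a k • (Amat M)ᵀ k := by
  constructor
  · rintro ⟨c, hc, hcJ, rfl⟩
    refine ⟨c, fun k _ => hc k, ?_⟩
    rw [Amat_mulVec_eq_sum, ← sum_subset (subset_univ J) fun l _ hl => by rw [hcJ l hl, zero_smul]]
  · rintro ⟨a, ha, rfl⟩
    refine ⟨fun l => if l ∈ J then a l else 0, fun l => ?_, fun l hl => if_neg hl, ?_⟩
    · dsimp only
      split_ifs with h
      exacts [ha l h, le_rfl]
    · exact (Amat_mulVec_indicator M J a).symm

lemma coneOf_mono {J J' : Finset (Fin n ⊕ Fin n)} (h : J ⊆ J') : coneOf M J ⊆ coneOf M J' :=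
  fun _ ⟨c, hc, hcJ, hy⟩ => ⟨c, hc, fun l hl => hcJ l fun hlJ => hl (h hlJ), hy⟩

lemma zero_mem_coneOf (J : Finset (Fin n ⊕ Fin n)) : (0 : Fin n → ℝ) ∈ coneOf M J :=
  ⟨0, fun _ => le_rfl, fun _ _ => rfl, (mulVec_zero _).symm⟩

lemma col_mem_coneOf {J : Finset (Fin n ⊕ Fin n)} {k : Fin n ⊕ Fin n} (hk : k ∈ J) :
    (Amat M)ᵀ k ∈ coneOf M J := by
  refine ⟨Pi.single k 1, fun l => ?_, fun l hl => ?_, by rw [Amat_mulVec_single, one_smul]⟩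
  · by_cases h : l = k <;> simp [h]
  · simp [show l ≠ k from fun h => hl (h ▸ hk)]

lemma mem_coneOf_insert_iff {J : Finset (Fin n ⊕ Fin n)} {l : Fin n ⊕ Fin n} (hl : l ∉ J)
    {y : Fin n → ℝ} :
    y ∈ coneOf M (insert l J) ↔ ∃ t : ℝ, 0 ≤ t ∧ ∃ z ∈ coneOf M J, y = t • (Amat M)ᵀ l + z := by
  simp only [mem_coneOf_iff, sum_insert hl, forall_mem_insert]
  constructor
  · rintro ⟨a, ⟨hal, ha⟩, rfl⟩
    exact ⟨a l, hal, _, ⟨a, ha, rfl⟩, rfl⟩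
  · rintro ⟨t, ht, _, ⟨a, ha, rfl⟩, rfl⟩
    refine ⟨Function.update a l t, ⟨by simp [ht], fun k hk => ?_⟩, ?_⟩
    · rw [Function.update_of_ne (ne_of_mem_of_not_mem hk hl)]
      exact ha k hk
    · rw [Function.update_self]
      congr 1
      exact sum_congr rfl fun k hk => by rw [Function.update_of_ne (ne_of_mem_of_not_mem hk hl)]

end Cone

def IsInverseRows {n : ℕ} (M : Matrix (Fin n) (Fin n) ℝ) (B : Finset (Fin n ⊕ Fin n))
    (β : Fin n ⊕ Fin n → Fin n → ℝ) : Prop :=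
  ∀ k ∈ B, ∀ l ∈ B, β k ⬝ᵥ (Amat M)ᵀ l = if k = l then 1 else 0

section InverseRows

variable {n : ℕ} {M : Matrix (Fin n) (Fin n) ℝ} {B : Finset (Fin n ⊕ Fin n)}
  {β : Fin n ⊕ Fin n → Fin n → ℝ}

lemma IsInverseRows.dotProduct_sum_smul_col (hβ : IsInverseRows M B β)
    {J : Finset (Fin n ⊕ Fin n)} (hJ : J ⊆ B) {k : Fin n ⊕ Fin n} (hk : k ∈ B)
    (a : Fin n ⊕ Fin n → ℝ) :
    β k ⬝ᵥ ∑ l ∈ J, a l • (Amat M)ᵀ l = if k ∈ J then a k else 0 := by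
  rw [dotProduct_sum, ← sum_ite_eq]
  exact sum_congr rfl fun l hl => by
    rw [dotProduct_smul, hβ k hk l (hJ hl), smul_eq_mul, mul_ite, mul_one, mul_zero]

lemma IsInverseRows.sum_dotProduct_smul_col (hβ : IsInverseRows M B β) (hB : IsBasis M B)
    (y : Fin n → ℝ) : ∑ k ∈ B, (β k ⬝ᵥ y) • (Amat M)ᵀ k = y := by
  have hspan : Submodule.span ℝ (Set.range fun k : B => (Amat M)ᵀ k) = ⊤ :=
    hB.2.span_eq_top_of_card_eq_finrank' (by simp [hB.1])
  have hid : ∑ k ∈ B, (dotProductEquiv ℝ (Fin n) (β k)).smulRight ((Amat M)ᵀ k) =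
      LinearMap.id := by
    refine LinearMap.ext_on_range hspan fun k => ?_
    simp only [LinearMap.sum_apply, LinearMap.smulRight_apply, dotProductEquiv_apply_apply,
      LinearMap.id_apply]
    rw [sum_eq_single_of_mem k.1 k.2 fun l hl hlk => by rw [hβ l hl k k.2, if_neg hlk, zero_smul],
      hβ k k.2 k k.2, if_pos rfl, one_smul]
  simpa using LinearMap.congr_fun hid y

lemma IsInverseRows.mem_coneOf_iff_of_subset (hβ : IsInverseRows M B β) (hB : IsBasis M B)
    {J : Finset (Fin n ⊕ Fin n)} (hJ : J ⊆ B) {y : Fin n → ℝ} :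
    y ∈ coneOf M J ↔ ∀ k ∈ B, 0 ≤ β k ⬝ᵥ y ∧ (k ∉ J → β k ⬝ᵥ y = 0) := by
  constructor
  · rintro hy k hk
    obtain ⟨a, ha, rfl⟩ := mem_coneOf_iff.1 hy
    rw [hβ.dotProduct_sum_smul_col hJ hk]
    split_ifs with hkJ
    exacts [⟨ha k hkJ, fun h => (h hkJ).elim⟩, ⟨le_rfl, fun _ => rfl⟩]
  · intro hy
    refine mem_coneOf_iff.2 ⟨fun k => β k ⬝ᵥ y, fun k hk => (hy k (hJ hk)).1, ?_⟩
    conv_lhs => rw [← hβ.sum_dotProduct_smul_col hB y]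
    exact (sum_subset hJ fun k hk hkJ => by rw [(hy k hk).2 hkJ, zero_smul]).symm

/-- Column sufficiency of the dictionary: `β k ⬝ᵥ A *ᵥ γ = -(D γ)_k` for `γ` supported off `B`. -/
lemma IsInverseRows.mul_eq_zero_of_nonneg (hβ : IsInverseRows M B β) (hM : ColSuff M)
    (hB : IsComplBasis M B) {γ : Fin n ⊕ Fin n → ℝ} (hγ : ∀ l ∈ B, γ l = 0)
    (hnn : ∀ k ∈ B, 0 ≤ (β k ⬝ᵥ Amat M *ᵥ γ) * γ (bar k)) :
    ∀ k ∈ B, (β k ⬝ᵥ Amat M *ᵥ γ) * γ (bar k) = 0 := by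
  set w : Fin n ⊕ Fin n → ℝ := fun l => if l ∈ B then -(β l ⬝ᵥ Amat M *ᵥ γ) else γ l
  have hw : Amat M *ᵥ w = 0 := by
    have hγw : γ = w + fun l => if l ∈ B then β l ⬝ᵥ Amat M *ᵥ γ else 0 := by
      ext l
      by_cases hl : l ∈ B <;> simp [w, hl, hγ]
    have hsplit := congrArg (Amat M *ᵥ ·) hγw
    rw [mulVec_add, Amat_mulVec_indicator, hβ.sum_dotProduct_smul_col hB.1] at hsplit
    simpa using hsplit
  have hwk : ∀ k ∈ B, w k * w (bar k) = -((β k ⬝ᵥ Amat M *ᵥ γ) * γ (bar k)) := fun k hk => by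
    simp [w, hk, hB.bar_notMem hk]
  have hpair : ∀ m, ∃ k ∈ B, w (.inl m) * w (.inr m) = w k * w (bar k) := fun m => by
    rcases hB.2 m with ⟨h, -⟩ | ⟨h, -⟩
    exacts [⟨_, h, rfl⟩, ⟨_, h, mul_comm _ _⟩]
  have hzero := hM.mul_eq_zero_of_Amat_mulVec_eq_zero hw fun m => by
    obtain ⟨k, hk, hm⟩ := hpair m
    rw [hm, hwk k hk, neg_nonpos]
    exact hnn k hk
  intro k hk
  rcases k with m | m
  · exact neg_eq_zero.1 ((hwk _ hk).symm.trans (hzero m))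
  · exact neg_eq_zero.1 ((hwk _ hk).symm.trans ((mul_comm _ _).trans (hzero m)))

lemma IsInverseRows.finrank_vectorSpan_eq_sub_one_iff (hβ : IsInverseRows M B β)
    (hB : IsBasis M B) {i j : Fin n ⊕ Fin n} (hi : i ∈ B) (hj : j ∈ B) (hij : i ≠ j)
    {S : Set (Fin n → ℝ)} (h0 : 0 ∈ S) (hcol : ∀ k ∈ B, k ≠ i → k ≠ j → (Amat M)ᵀ k ∈ S)
    (hSi : ∀ y ∈ S, β i ⬝ᵥ y = 0) :
    Module.finrank ℝ (vectorSpan ℝ S) = n - 1 ↔ ∃ y ∈ S, β j ⬝ᵥ y ≠ 0 := by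
  have hP : vectorSpan ℝ S = Submodule.span ℝ S := by
    simp [vectorSpan_eq_span_vsub_set_right ℝ h0]
  set K := LinearMap.ker (dotProductEquiv ℝ (Fin n) (β i))
  have hK : Module.finrank ℝ K = n - 1 := by
    have hne : dotProductEquiv ℝ (Fin n) (β i) ≠ 0 := fun h => by
      simpa [hβ i hi i hi] using LinearMap.congr_fun h ((Amat M)ᵀ i)
    have : Module.finrank ℝ K + 1 = n := by
      conv_rhs => rw [← Module.finrank_fin_fun ℝ (n := n)]
      exact Module.Dual.finrank_ker_add_one_of_ne_zero hne
    omega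
  have hPK : Submodule.span ℝ S ≤ K := Submodule.span_le.2 hSi
  have hsub : ∀ x, β i ⬝ᵥ x = 0 → x - (β j ⬝ᵥ x) • (Amat M)ᵀ j ∈ Submodule.span ℝ S := by
    intro x hx
    have hexp := hβ.sum_dotProduct_smul_col hB x
    rw [← add_sum_erase _ _ hj] at hexp
    rw [← eq_sub_of_add_eq' hexp]
    refine Submodule.sum_mem _ fun k hk => ?_
    obtain ⟨hkj, hkB⟩ := mem_erase.1 hk
    by_cases hki : k = i
    · rw [hki, hx, zero_smul]
      exact zero_mem _
    · exact Submodule.smul_mem _ _ (Submodule.subset_span (hcol k hkB hki hkj))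
  have hjP : (∃ y ∈ S, β j ⬝ᵥ y ≠ 0) → (Amat M)ᵀ j ∈ Submodule.span ℝ S := by
    rintro ⟨y, hy, hyj⟩
    have := sub_mem (Submodule.subset_span hy) (hsub y (hSi y hy))
    rw [sub_sub_cancel] at this
    exact (Submodule.smul_mem_iff _ hyj).1 this
  constructor
  · intro h
    by_contra! hS
    have hPK' : Submodule.span ℝ S = K := Submodule.eq_of_le_of_finrank_eq hPK (by rw [← hP, h, hK])
    have hjK : (Amat M)ᵀ j ∈ K := by simp [K, hβ i hi j hj, hij]
    rw [← hPK'] at hjK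
    have := (Submodule.span_le (p := LinearMap.ker (dotProductEquiv ℝ (Fin n) (β j)))).2 hS hjK
    simp [hβ j hj j hj] at this
  · intro h
    rw [hP, le_antisymm hPK fun x hx => ?_, hK]
    have hx' : β i ⬝ᵥ x = 0 := hx
    simpa using add_mem (hsub x hx') (Submodule.smul_mem _ (β j ⬝ᵥ x) (hjP h))

end InverseRows

section Pivot

variable {n : ℕ} {M : Matrix (Fin n) (Fin n) ℝ} {B : Finset (Fin n ⊕ Fin n)}
  {β : Fin n ⊕ Fin n → Fin n → ℝ} {i j : Fin n ⊕ Fin n}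

lemma IsComplBasis.bar_notMem_insert_bar (hB : IsComplBasis M B) (hi : i ∈ B) (hij : i ≠ j) :
    bar i ∉ insert (bar j) ((B.erase i).erase j) := by
  simp [bar_injective.ne hij, hB.bar_notMem hi]

lemma IsInverseRows.dotProduct_col_bar_of_mem_inter (hβ : IsInverseRows M B β) (hM : ColSuff M)
    (hB : IsComplBasis M B) (hi : i ∈ B) (hj : j ∈ B) (hij : i ≠ j) {y : Fin n → ℝ}
    (hy₁ : y ∈ coneOf M (B.erase i))
    (hy₂ : y ∈ coneOf M (insert (bar i) (insert (bar j) ((B.erase i).erase j))))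
    (hyj : β j ⬝ᵥ y ≠ 0) :
    β i ⬝ᵥ (Amat M)ᵀ (bar i) = 0 ∧ 0 < β j ⬝ᵥ (Amat M)ᵀ (bar i) := by
  have hT : (B.erase i).erase j ⊆ B := (erase_subset _ _).trans (erase_subset _ _)
  have hy₁' := (hβ.mem_coneOf_iff_of_subset hB.1 (erase_subset i B)).1 hy₁
  have hyi : β i ⬝ᵥ y = 0 := (hy₁' i hi).2 (notMem_erase i B)
  have hyj' : 0 < β j ⬝ᵥ y := lt_of_le_of_ne (hy₁' j hj).1 (Ne.symm hyj)
  obtain ⟨u, hu, _, hy', rfl⟩ := (mem_coneOf_insert_iff (hB.bar_notMem_insert_bar hi hij)).1 hy₂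
  obtain ⟨v, hv, z, hz, rfl⟩ :=
    (mem_coneOf_insert_iff fun h => hB.bar_notMem hj (hT h)).1 hy'
  have hz' := (hβ.mem_coneOf_iff_of_subset hB.1 hT).1 hz
  have hzi : β i ⬝ᵥ z = 0 := (hz' i hi).2 (by simp)
  have hzj : β j ⬝ᵥ z = 0 := (hz' j hj).2 (by simp)
  simp only [dotProduct_add, dotProduct_smul, smul_eq_mul, hzi, hzj, add_zero] at hyi hyj'
  set γ : Fin n ⊕ Fin n → ℝ := Pi.single (bar i) u + Pi.single (bar j) v
  have hdot : ∀ k, β k ⬝ᵥ Amat M *ᵥ γ =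
      u * (β k ⬝ᵥ (Amat M)ᵀ (bar i)) + v * (β k ⬝ᵥ (Amat M)ᵀ (bar j)) := fun k => by
    simp only [γ, mulVec_add, Amat_mulVec_single, dotProduct_add, dotProduct_smul, smul_eq_mul]
  have hγ : ∀ l ∈ B, γ l = 0 := fun l hl => by
    simp [γ, ne_of_mem_of_not_mem hl (hB.bar_notMem hi),
      ne_of_mem_of_not_mem hl (hB.bar_notMem hj)]
  have hγbar : ∀ k, γ (bar k) = (if k = i then u else 0) + (if k = j then v else 0) := fun k => by
    simp [γ, Pi.single_apply, bar_injective.eq_iff]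
  have hv : v = 0 := by
    have h := hβ.mul_eq_zero_of_nonneg hM hB hγ (fun k _ => ?_) j hj
    · rw [hdot, hγbar, if_neg hij.symm, if_pos rfl, zero_add] at h
      exact (mul_eq_zero.1 h).resolve_left hyj'.ne'
    · rw [hdot, hγbar]
      by_cases hki : k = i
      · subst hki
        simp [hij, hyi]
      · by_cases hkj : k = j
        · subst hkj
          simpa [hki] using mul_nonneg hyj'.le hv
        · simp [hki, hkj]
  subst hv
  simp only [zero_mul, add_zero] at hyi hyj'
  exact ⟨(mul_eq_zero.1 hyi).resolve_left (left_ne_zero_of_mul hyj'.ne'),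
    pos_of_mul_pos_right hyj' hu⟩

lemma IsInverseRows.exists_mem_inter_of_dotProduct_col_bar (hβ : IsInverseRows M B β)
    (hB : IsComplBasis M B) (hi : i ∈ B) (hj : j ∈ B) (hij : i ≠ j)
    (h₁ : β i ⬝ᵥ (Amat M)ᵀ (bar i) = 0) (h₂ : 0 < β j ⬝ᵥ (Amat M)ᵀ (bar i)) :
    ∃ y ∈ coneOf M (B.erase i) ∩
      coneOf M (insert (bar i) (insert (bar j) ((B.erase i).erase j))), β j ⬝ᵥ y ≠ 0 := by
  set T := (B.erase i).erase j
  have hT : T ⊆ B := (erase_subset _ _).trans (erase_subset _ _)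
  set z := ∑ k ∈ T, max (-(β k ⬝ᵥ (Amat M)ᵀ (bar i))) 0 • (Amat M)ᵀ k
  have hz : z ∈ coneOf M T := mem_coneOf_iff.2 ⟨_, fun k _ => le_max_right _ _, rfl⟩
  have hdot : ∀ k ∈ B, β k ⬝ᵥ ((1 : ℝ) • (Amat M)ᵀ (bar i) + z) = β k ⬝ᵥ (Amat M)ᵀ (bar i) +
      if k ∈ T then max (-(β k ⬝ᵥ (Amat M)ᵀ (bar i))) 0 else 0 := fun k hk => by
    rw [one_smul, dotProduct_add, hβ.dotProduct_sum_smul_col hT hk]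
  refine ⟨(1 : ℝ) • (Amat M)ᵀ (bar i) + z, ⟨?_, ?_⟩, ?_⟩
  · rw [hβ.mem_coneOf_iff_of_subset hB.1 (erase_subset i B)]
    intro k hk
    rw [hdot k hk]
    by_cases hkT : k ∈ T
    · simp only [hkT, if_true, mem_of_mem_erase hkT, not_true_eq_false, false_imp_iff, and_true]
      linarith [le_max_left (-(β k ⬝ᵥ (Amat M)ᵀ (bar i))) 0]
    · have hk' : k = i ∨ k = j := by
        simp only [T, mem_erase, not_and_or, not_not] at hkT
        tauto
      rcases hk' with rfl | rfl
      · simp [h₁, hkT]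
      · simp [hkT, h₂.le, hij.symm, hk]
  · exact (mem_coneOf_insert_iff (hB.bar_notMem_insert_bar hi hij)).2
      ⟨1, zero_le_one, z, coneOf_mono (subset_insert _ _) hz, rfl⟩
  · rw [hdot j hj, if_neg (by simp [T]), add_zero]
    exact h₂.ne'

end Pivot

theorem stmt_7_general {n : ℕ} (M : Matrix (Fin n) (Fin n) ℝ) (hM : Suff M)
    (B : Finset (Fin n ⊕ Fin n)) (hB : IsComplBasis M B)
    (β : (Fin n ⊕ Fin n) → (Fin n → ℝ))
    -- β consists of the rows of A_B⁻¹ (indexed by B): β k ⬝ (column l of A) = δ_{k l} for k, l ∈ B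
    (hβ : ∀ k ∈ B, ∀ l ∈ B, β k ⬝ᵥ (Amat M)ᵀ l = if k = l then 1 else 0)
    (i j : Fin n ⊕ Fin n) (hi : i ∈ B) (hj : j ∈ B) (hij : i ≠ j) :
    Module.finrank ℝ (vectorSpan ℝ
        (coneOf M (B.erase i) ∩
          coneOf M (insert (bar i) (insert (bar j) ((B.erase i).erase j))))) = n - 1 ↔
      (-(β i ⬝ᵥ (Amat M)ᵀ (bar i)) = 0 ∧ -(β j ⬝ᵥ (Amat M)ᵀ (bar i)) < 0) := by
  have hβ' : IsInverseRows M B β := hβ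
  set S := coneOf M (B.erase i) ∩ coneOf M (insert (bar i) (insert (bar j) ((B.erase i).erase j)))
  have h0 : 0 ∈ S := ⟨zero_mem_coneOf _, zero_mem_coneOf _⟩
  have hcol : ∀ k ∈ B, k ≠ i → k ≠ j → (Amat M)ᵀ k ∈ S := fun k hk hki hkj =>
    ⟨col_mem_coneOf (by simp [hk, hki]), col_mem_coneOf (by simp [hk, hki, hkj])⟩
  have hSi : ∀ y ∈ S, β i ⬝ᵥ y = 0 := fun y hy =>
    ((hβ'.mem_coneOf_iff_of_subset hB.1 (erase_subset i B)).1 hy.1 i hi).2 (notMem_erase i B)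
  rw [hβ'.finrank_vectorSpan_eq_sub_one_iff hB.1 hi hj hij h0 hcol hSi, neg_eq_zero, neg_lt_zero]
  constructor
  · rintro ⟨y, ⟨hy₁, hy₂⟩, hyj⟩
    exact hβ'.dotProduct_col_bar_of_mem_inter hM.1 hB hi hj hij hy₁ hy₂ hyj
  · rintro ⟨h₁, h₂⟩
    exact hβ'.exists_mem_inter_of_dotProduct_col_bar hB hi hj hij h₁ h₂

theorem stmt_7 {n : ℕ} (M : Matrix (Fin n) (Fin n) ℝ) (hM : Suff M)
    (B : Finset (Fin n ⊕ Fin n)) (hB : IsComplBasis M B)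
    (β : (Fin n ⊕ Fin n) → (Fin n → ℝ))
    -- β consists of the rows of A_B⁻¹ (indexed by B): β k ⬝ (column l of A) = δ_{k l} for k, l ∈ B
    (hβ : ∀ k ∈ B, ∀ l ∈ B, β k ⬝ᵥ (Amat M)ᵀ l = if k = l then 1 else 0)
    (i j : Fin n ⊕ Fin n) (hi : i ∈ B) (hj : j ∈ B) (hij : i ≠ j)
    (hB' : IsBasis M (insert (bar i) (insert (bar j) ((B.erase i).erase j)))) :
    Module.finrank ℝ (vectorSpan ℝ
        (coneOf M (B.erase i) ∩
          coneOf M (insert (bar i) (insert (bar j) ((B.erase i).erase j))))) = n - 1 ↔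
      (-(β i ⬝ᵥ (Amat M)ᵀ (bar i)) = 0 ∧ -(β j ⬝ᵥ (Amat M)ᵀ (bar i)) < 0) :=
  stmt_7_general M hM B hB β hβ i j hi hj hij
end

section
/- If M is sufficient and the affine subspace S = {q + Qθ : θ ∈ ℝ^d} lies in general position (i.e., for every complementary basis B, S ∩ 𝒞(B) ≠ ∅ implies S ∩ int 𝒞(B) ≠ ∅), then for any two distinct complementary bases B₁, B₂ the relative interiors of the critical domains S_{B₁} = 𝒞(B₁) ∩ S and S_{B₂} = 𝒞(B₂) ∩ S are disjoint. -/
open Matrix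

/-!
General position lets a point of the relative interior of the convex set `𝒞(B) ∩ S` be pushed
into `int 𝒞(B)`: moving slightly past it, away from a point of `S ∩ int 𝒞(B)`, stays in
`𝒞(B) ∩ S`, so it lies on an open segment from an interior point of `𝒞(B)`.

Interior points of a complementary cone have strictly positive coordinates on `B`. If `y` had
such representations `y = w₁ - M x₁ = w₂ - M x₂` for two complementary bases, then
`z = x₁ - x₂` satisfies `zᵢ (M z)ᵢ = -(x₁ᵢ w₂ᵢ + x₂ᵢ w₁ᵢ) ≤ 0`, so column sufficiency forces the
cross products to vanish, which is incompatible with positivity on an index of `B₁ \ B₂`.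
-/

open Filter Topology

theorem intrinsicInterior_subset_interior_of_mem {E : Type*} [NormedAddCommGroup E]
    [NormedSpace ℝ E] {K C : Set E} (hC : Convex ℝ C) (hKC : K ⊆ C) {y : E} (hyK : y ∈ K)
    (hyC : y ∈ interior C) : intrinsicInterior ℝ K ⊆ interior C := by
  rintro _ ⟨x, hx, rfl⟩
  let g : ℝ → affineSpan ℝ K := fun t =>
    ⟨AffineMap.lineMap y x t, AffineMap.lineMap_mem t (subset_affineSpan ℝ K hyK) x.2⟩
  have hg : Continuous g := by fun_prop
  have hg1 : g 1 = x := by ext; simp [g]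
  have hnear : ∀ᶠ t in 𝓝[>] (1 : ℝ), g t ∈ (↑) ⁻¹' K :=
    nhdsWithin_le_nhds (hg.tendsto' 1 x hg1 |>.eventually (mem_interior_iff_mem_nhds.1 hx))
  obtain ⟨t, hgt, ht⟩ := (hnear.and self_mem_nhdsWithin).exists
  have ht0 : 0 < t := by linarith [show (1 : ℝ) < t from ht]
  refine hC.openSegment_interior_self_subset_interior hyC (hKC hgt) ?_
  rw [openSegment_eq_image_lineMap]
  refine ⟨t⁻¹, ⟨inv_pos.2 ht0, inv_lt_one_of_one_lt₀ ht⟩, ?_⟩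
  simp only [g, AffineMap.lineMap_apply_module', smul_smul, inv_mul_cancel₀ ht0.ne', one_smul,
    add_sub_cancel_right, sub_add_cancel]

theorem Matrix.eq_zero_of_mulVec_eq_zero_of_linearIndependent {m ι : Type*} [Fintype ι]
    {A : Matrix m ι ℝ} {B : Finset ι} (hB : LinearIndependent ℝ (fun j : B => Aᵀ (j : ι)))
    {u : ι → ℝ} (hu : ∀ j ∉ B, u j = 0) (hAu : A *ᵥ u = 0) : u = 0 := by
  have hsum : ∑ j : B, u j • Aᵀ (j : ι) = 0 := by
    rw [Finset.sum_coe_sort B (fun j => u j • Aᵀ j),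
      Finset.sum_subset (Finset.subset_univ B) (fun j _ hj => by simp [hu j hj]), ← hAu,
      mulVec_eq_sum]
    simp
  funext j
  by_cases hj : j ∈ B
  · exact Fintype.linearIndependent_iff.1 hB (fun j => u j) hsum ⟨j, hj⟩
  · exact hu j hj

theorem Amat_mulVec {n : ℕ} (M : Matrix (Fin n) (Fin n) ℝ) (c : Fin n ⊕ Fin n → ℝ) :
    Amat M *ᵥ c = (fun i => c (.inl i)) - M *ᵥ (fun i => c (.inr i)) := by
  rw [← Sum.elim_comp_inl_inr c, Amat, fromCols_mulVec_sumElim, neg_mulVec, one_mulVec,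
    sub_eq_add_neg]
  rfl

theorem convex_coneOf {n : ℕ} (M : Matrix (Fin n) (Fin n) ℝ) (J : Finset (Fin n ⊕ Fin n)) :
    Convex ℝ (coneOf M J) := by
  rintro _ ⟨c₁, hc₁, hc₁J, rfl⟩ _ ⟨c₂, hc₂, hc₂J, rfl⟩ a b ha hb -
  refine ⟨a • c₁ + b • c₂, fun j => ?_, fun j hj => by simp [hc₁J j hj, hc₂J j hj], by
    simp [mulVec_add, mulVec_smul]⟩
  simp only [Pi.add_apply, Pi.smul_apply, smul_eq_mul]
  exact add_nonneg (mul_nonneg ha (hc₁ j)) (mul_nonneg hb (hc₂ j))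

theorem exists_pos_of_mem_interior_coneOf {n : ℕ} {M : Matrix (Fin n) (Fin n) ℝ}
    {B : Finset (Fin n ⊕ Fin n)} (hB : IsBasis M B) {y : Fin n → ℝ}
    (hy : y ∈ interior (coneOf M B)) :
    ∃ c : Fin n ⊕ Fin n → ℝ, (∀ j, 0 ≤ c j) ∧ (∀ j ∉ B, c j = 0) ∧ y = Amat M *ᵥ c ∧
      ∀ j ∈ B, 0 < c j := by
  obtain ⟨c, hc, hcB, rfl⟩ := interior_subset hy
  refine ⟨c, hc, hcB, rfl, fun j hj => ?_⟩
  -- `y - t • Aⱼ` stays in the cone for small `t > 0`, and its coordinates on `B` are unique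
  have hnear : ∀ᶠ t in 𝓝 (0 : ℝ), Amat M *ᵥ (c - Pi.single j t) ∈ coneOf M B := by
    have hcont : Continuous fun t : ℝ => Amat M *ᵥ (c - Pi.single j t) :=
      continuous_const.matrix_mulVec <|
        continuous_const.sub (continuous_single (A := fun _ => ℝ) j)
    exact hcont.tendsto' 0 _ (by simp) |>.eventually (mem_interior_iff_mem_nhds.1 hy)
  obtain ⟨t, ⟨c', hc', hc'B, hc'eq⟩, ht⟩ :=
    ((hnear.filter_mono nhdsWithin_le_nhds).and (self_mem_nhdsWithin (s := Set.Ioi 0))).exists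
  have hdiff : c - Pi.single j t - c' = 0 := by
    refine eq_zero_of_mulVec_eq_zero_of_linearIndependent hB.2 (fun k hk => ?_) ?_
    · have hkj : k ≠ j := fun h => hk (h ▸ hj)
      simp [hcB k hk, hc'B k hk, hkj]
    · rw [mulVec_sub, hc'eq, sub_self]
  have := congrFun hdiff j
  simp only [Pi.sub_apply, Pi.single_eq_same, Pi.zero_apply] at this
  linarith [hc' j, show (0 : ℝ) < t from ht]

theorem ColSuff.mul_bar_eq_zero {n : ℕ} {M : Matrix (Fin n) (Fin n) ℝ} (hM : ColSuff M)
    {c₁ c₂ : Fin n ⊕ Fin n → ℝ} (hc₁ : ∀ j, 0 ≤ c₁ j) (hc₂ : ∀ j, 0 ≤ c₂ j)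
    (hcompl₁ : ∀ i, c₁ (.inl i) * c₁ (.inr i) = 0) (hcompl₂ : ∀ i, c₂ (.inl i) * c₂ (.inr i) = 0)
    (h : Amat M *ᵥ c₁ = Amat M *ᵥ c₂) (j : Fin n ⊕ Fin n) : c₁ j * c₂ (bar j) = 0 := by
  set z : Fin n → ℝ := (fun i => c₁ (.inr i)) - fun i => c₂ (.inr i)
  have hMz : M *ᵥ z = fun i => c₁ (.inl i) - c₂ (.inl i) := by
    rw [Amat_mulVec, Amat_mulVec] at h
    funext i
    have := congrFun h i
    simp only [z, mulVec_sub, Pi.sub_apply] at this ⊢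
    linarith
  have hzMz : ∀ i,
      z i * (M *ᵥ z) i = -(c₁ (.inr i) * c₂ (.inl i) + c₂ (.inr i) * c₁ (.inl i)) := by
    intro i
    rw [hMz]
    simp only [z, Pi.sub_apply]
    linear_combination hcompl₁ i + hcompl₂ i
  have hcross : ∀ i, 0 ≤ c₁ (.inr i) * c₂ (.inl i) + c₂ (.inr i) * c₁ (.inl i) := fun i =>
    add_nonneg (mul_nonneg (hc₁ _) (hc₂ _)) (mul_nonneg (hc₂ _) (hc₁ _))
  have hzero : ∀ i, c₁ (.inr i) * c₂ (.inl i) + c₂ (.inr i) * c₁ (.inl i) = 0 := fun i => by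
    have := hM z (fun k => by rw [hzMz]; linarith [hcross k]) i
    rw [hzMz] at this
    linarith
  rcases j with i | i <;> simp only [bar] <;>
    linarith [hzero i, mul_nonneg (hc₁ (.inr i)) (hc₂ (.inl i)),
      mul_nonneg (hc₂ (.inr i)) (hc₁ (.inl i))]

namespace IsComplBasis

variable {n : ℕ} {M : Matrix (Fin n) (Fin n) ℝ} {B B' : Finset (Fin n ⊕ Fin n)}

theorem bar_mem_of_notMem (hB : IsComplBasis M B) {j : Fin n ⊕ Fin n} (hj : j ∉ B) :
    bar j ∈ B := by
  rcases j with i | i <;> rcases hB.2 i with ⟨h, h'⟩ | ⟨h, h'⟩ <;> simp_all [bar]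

theorem mul_eq_zero_of_support (hB : IsComplBasis M B) {c : Fin n ⊕ Fin n → ℝ}
    (hc : ∀ j ∉ B, c j = 0) (i : Fin n) : c (.inl i) * c (.inr i) = 0 := by
  rcases hB.2 i with ⟨-, h⟩ | ⟨-, h⟩ <;> simp [hc _ h]

theorem subset_of_mem_interior_coneOf (hM : ColSuff M) (hB : IsComplBasis M B)
    (hB' : IsComplBasis M B') {y : Fin n → ℝ}
    (hy : y ∈ interior (coneOf M B)) (hy' : y ∈ interior (coneOf M B')) : B ⊆ B' := by
  obtain ⟨c, hc, hcB, rfl, hcpos⟩ := exists_pos_of_mem_interior_coneOf hB.1 hy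
  obtain ⟨c', hc', hc'B, hcc', hc'pos⟩ := exists_pos_of_mem_interior_coneOf hB'.1 hy'
  intro j hj
  by_contra hj'
  have := hM.mul_bar_eq_zero hc hc'
    (hB.mul_eq_zero_of_support hcB) (hB'.mul_eq_zero_of_support hc'B) hcc' j
  exact (mul_pos (hcpos j hj) (hc'pos _ (hB'.bar_mem_of_notMem hj'))).ne' this

theorem eq_of_mem_interior_coneOf (hM : ColSuff M) (hB : IsComplBasis M B)
    (hB' : IsComplBasis M B') {y : Fin n → ℝ}
    (hy : y ∈ interior (coneOf M B)) (hy' : y ∈ interior (coneOf M B')) : B = B' :=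
  Finset.eq_of_subset_of_card_le (hB.subset_of_mem_interior_coneOf hM hB' hy hy')
    (hB'.1.1.trans hB.1.1.symm).le

end IsComplBasis

theorem stmt_11_general {n : ℕ} (M : Matrix (Fin n) (Fin n) ℝ) (hM : Suff M)
    (S : Set (Fin n → ℝ))
    -- general position
    (hgp : ∀ B : Finset (Fin n ⊕ Fin n), IsComplBasis M B →
      (S ∩ coneOf M B).Nonempty → (S ∩ interior (coneOf M B)).Nonempty)
    (B₁ B₂ : Finset (Fin n ⊕ Fin n))
    (hB₁ : IsComplBasis M B₁) (hB₂ : IsComplBasis M B₂) (hne : B₁ ≠ B₂) :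
    intrinsicInterior ℝ (coneOf M B₁ ∩ S) ∩ intrinsicInterior ℝ (coneOf M B₂ ∩ S) = ∅ := by
  refine Set.eq_empty_iff_forall_notMem.2 fun y ⟨hy₁, hy₂⟩ => hne ?_
  have mem_interior : ∀ {B}, IsComplBasis M B →
      y ∈ intrinsicInterior ℝ (coneOf M B ∩ S) → y ∈ interior (coneOf M B) := fun hB hy => by
    obtain ⟨hyC, hyS⟩ := intrinsicInterior_subset hy
    obtain ⟨x, hxS, hxC⟩ := hgp _ hB ⟨y, hyS, hyC⟩
    exact intrinsicInterior_subset_interior_of_mem (convex_coneOf M _) Set.inter_subset_left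
      ⟨interior_subset hxC, hxS⟩ hxC hy
  exact hB₁.eq_of_mem_interior_coneOf hM.1 hB₂ (mem_interior hB₁ hy₁) (mem_interior hB₂ hy₂)

theorem stmt_11 {n d : ℕ} (M : Matrix (Fin n) (Fin n) ℝ) (hM : Suff M)
    (Q : Matrix (Fin n) (Fin d) ℝ) (q : Fin n → ℝ) (hQ : Q.rank = d)
    (S : Set (Fin n → ℝ)) (hS : S = {y | ∃ θ : Fin d → ℝ, y = q + Q.mulVec θ})
    -- general position
    (hgp : ∀ B : Finset (Fin n ⊕ Fin n), IsComplBasis M B →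
      (S ∩ coneOf M B).Nonempty → (S ∩ interior (coneOf M B)).Nonempty)
    (B₁ B₂ : Finset (Fin n ⊕ Fin n))
    (hB₁ : IsComplBasis M B₁) (hB₂ : IsComplBasis M B₂) (hne : B₁ ≠ B₂) :
    intrinsicInterior ℝ (coneOf M B₁ ∩ S) ∩ intrinsicInterior ℝ (coneOf M B₂ ∩ S) = ∅ :=
  stmt_11_general M hM S hgp B₁ B₂ hB₁ hB₂ hne
end
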